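/- arXiv:2203.06176 — 5 statements merged into one kernel-verified Lean document; each statement's English description precedes it below -/
import Mathlib

section
/- Let κ = κ(λ,N) be the effective regularization defined by 1 = λ/κ + (1/N) ∑_{i=1}^P λ_i/(κ + λ_i) with λ_i ≥ 0. Then the derivative ∂κ/∂λ satisfies ∂κ/∂λ = 1 / (1 − (1/N) ∑_{i=1}^P λ_i²/(κ + λ_i)²), and moreover 1 ≤ ∂κ/∂λ ≤ κ/λ. -/
/-!
Differentiating the fixed-point equation `1 = λ/κ + c ∑ λᵢ/(κ+λᵢ)` (with `c = 1/N`) gives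
`(κ - λκ')/κ² = c κ' ∑ λᵢ/(κ+λᵢ)²`. Since `λᵢ²/(κ+λᵢ)² = λᵢ/(κ+λᵢ) - κλᵢ/(κ+λᵢ)²`, the fixed-point
equation rewrites `D := 1 - c ∑ λᵢ²/(κ+λᵢ)²` as `λ/κ + cκ ∑ λᵢ/(κ+λᵢ)²`, and the derivative relation
then reads `κ' D = 1`. The two expressions for `D` give `λ/κ ≤ D ≤ 1`, whence `1 ≤ κ' ≤ κ/λ`.
-/

open Filter Topology

section EffectiveRegularization

variable {ι : Type*} [Fintype ι] {lam : ι → ℝ}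

theorem sum_sq_div_add_sq_eq {k : ℝ} (hk : ∀ i, k + lam i ≠ 0) :
    ∑ i, lam i ^ 2 / (k + lam i) ^ 2 =
      ∑ i, lam i / (k + lam i) - k * ∑ i, lam i / (k + lam i) ^ 2 := by
  rw [Finset.mul_sum, ← Finset.sum_sub_distrib]
  refine Finset.sum_congr rfl fun i _ => ?_
  field_simp [hk i]
  ring

theorem HasDerivAt.sum_div_add {kap : ℝ → ℝ} {k' l : ℝ} (hder : HasDerivAt kap k' l)
    (hk : ∀ i, kap l + lam i ≠ 0) :
    HasDerivAt (fun x => ∑ i, lam i / (kap x + lam i))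
      (-(k' * ∑ i, lam i / (kap l + lam i) ^ 2)) l := by
  refine (HasDerivAt.fun_sum (u := Finset.univ) fun i _ =>
    (hasDerivAt_const l (lam i)).div (hder.add_const (lam i)) (hk i)).congr_deriv ?_
  rw [Finset.mul_sum, ← Finset.sum_neg_distrib]
  refine Finset.sum_congr rfl fun i _ => ?_
  ring

variable {kap : ℝ → ℝ} {c k' l : ℝ}

theorem hasDerivAt_fixedPoint_relation (hder : HasDerivAt kap k' l) (hk : kap l ≠ 0)
    (hki : ∀ i, kap l + lam i ≠ 0)
    (hfix : ∀ᶠ x in 𝓝 l, x / kap x + c * ∑ i, lam i / (kap x + lam i) = 1) :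
    (kap l - l * k') / kap l ^ 2 = c * (k' * ∑ i, lam i / (kap l + lam i) ^ 2) := by
  have hF := ((hasDerivAt_id l).div hder hk).add ((hder.sum_div_add hki).const_mul c)
  have h0 := hF.unique ((hasDerivAt_const l (1 : ℝ)).congr_of_eventuallyEq hfix)
  simp only [id, one_mul] at h0
  linarith

theorem one_sub_sum_sq_eq (hki : ∀ i, kap l + lam i ≠ 0)
    (hfix : l / kap l + c * ∑ i, lam i / (kap l + lam i) = 1) :
    1 - c * ∑ i, lam i ^ 2 / (kap l + lam i) ^ 2 =
      l / kap l + c * (kap l * ∑ i, lam i / (kap l + lam i) ^ 2) := by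
  rw [sum_sq_div_add_sq_eq hki]
  linear_combination -hfix

theorem mul_one_sub_sum_sq_eq_one (hder : HasDerivAt kap k' l) (hk : kap l ≠ 0)
    (hki : ∀ i, kap l + lam i ≠ 0)
    (hfix : ∀ᶠ x in 𝓝 l, x / kap x + c * ∑ i, lam i / (kap x + lam i) = 1) :
    k' * (1 - c * ∑ i, lam i ^ 2 / (kap l + lam i) ^ 2) = 1 := by
  have hrel := hasDerivAt_fixedPoint_relation hder hk hki hfix
  rw [one_sub_sum_sq_eq hki hfix.self_of_nhds]
  field_simp at hrel ⊢
  linear_combination -hrel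

theorem div_le_one_sub_sum_sq (hlam : ∀ i, 0 ≤ lam i) (hc : 0 ≤ c) (hk : 0 < kap l)
    (hfix : l / kap l + c * ∑ i, lam i / (kap l + lam i) = 1) :
    l / kap l ≤ 1 - c * ∑ i, lam i ^ 2 / (kap l + lam i) ^ 2 ∧
      1 - c * ∑ i, lam i ^ 2 / (kap l + lam i) ^ 2 ≤ 1 := by
  have hki : ∀ i, 0 < kap l + lam i := fun i => add_pos_of_pos_of_nonneg hk (hlam i)
  have hb : 0 ≤ c * (kap l * ∑ i, lam i / (kap l + lam i) ^ 2) :=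
    mul_nonneg hc <| mul_nonneg hk.le <|
      Finset.sum_nonneg fun i _ => div_nonneg (hlam i) (by positivity)
  have hs : 0 ≤ c * ∑ i, lam i ^ 2 / (kap l + lam i) ^ 2 :=
    mul_nonneg hc (Finset.sum_nonneg fun i _ => by positivity)
  have hD := one_sub_sum_sq_eq (fun i => (hki i).ne') hfix
  constructor <;> linarith

end EffectiveRegularization

theorem stmt_2_general (P N : ℕ) (lam : Fin P → ℝ)
    (hlam : ∀ i, 0 ≤ lam i)
    (kap : ℝ → ℝ) (hpos : ∀ l > 0, 0 < kap l)
    (heq : ∀ l > 0, 1 = l / kap l + (1 / (N : ℝ)) * ∑ i, lam i / (kap l + lam i))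
    (l : ℝ) (hl : 0 < l) (k' : ℝ) (hder : HasDerivAt kap k' l) :
    k' = 1 / (1 - (1 / (N : ℝ)) * ∑ i, (lam i) ^ 2 / (kap l + lam i) ^ 2) ∧
      1 ≤ k' ∧ k' ≤ kap l / l := by
  have hk : 0 < kap l := hpos l hl
  have hki : ∀ i, kap l + lam i ≠ 0 := fun i => (add_pos_of_pos_of_nonneg hk (hlam i)).ne'
  have hfix : ∀ᶠ x in 𝓝 l, x / kap x + 1 / (N : ℝ) * ∑ i, lam i / (kap x + lam i) = 1 :=
    (eventually_gt_nhds hl).mono fun x hx => (heq x hx).symm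
  have hmul := mul_one_sub_sum_sq_eq_one hder hk.ne' hki hfix
  obtain ⟨hlow, hup⟩ := div_le_one_sub_sum_sq hlam (by positivity) hk hfix.self_of_nhds
  have hlk : 0 < l / kap l := div_pos hl hk
  have hk' := eq_one_div_of_mul_eq_one_left hmul
  refine ⟨hk', ?_, ?_⟩
  · rw [hk']
    exact one_le_one_div (hlk.trans_le hlow) hup
  · rw [hk', ← one_div_div l (kap l)]
    exact one_div_le_one_div_of_le hlk hlow

/-- Derivative formula and bounds for the effective regularization κ(λ, N):
∂κ/∂λ = 1/(1 − (1/N)∑ λᵢ²/(κ+λᵢ)²) and 1 ≤ ∂κ/∂λ ≤ κ/λ. -/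
theorem stmt_2 (P N : ℕ) (hN : 0 < N) (lam : Fin P → ℝ)
    (hlam : ∀ i, 0 ≤ lam i)
    (kap : ℝ → ℝ) (hpos : ∀ l > 0, 0 < kap l)
    (heq : ∀ l > 0, 1 = l / kap l + (1 / (N : ℝ)) * ∑ i, lam i / (kap l + lam i))
    (l : ℝ) (hl : 0 < l) (k' : ℝ) (hder : HasDerivAt kap k' l) :
    k' = 1 / (1 - (1 / (N : ℝ)) * ∑ i, (lam i) ^ 2 / (kap l + lam i) ^ 2) ∧
      1 ≤ k' ∧ k' ≤ kap l / l :=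
  stmt_2_general P N lam hlam kap hpos heq l hl k' hder
end

section
/- Let λ, η > 0, let λ_i ≥ 0 for i = 1,...,P, and suppose κ̃ ∈ ℂ satisfies κ̃ = λ − iη + (1/N) ∑_{i=1}^P λ_i(1 − λ_i/(κ̃ + λ_i)) with Re(κ̃) > 0. Let κ > 0 be the unique positive solution of κ = λ + (1/N) ∑_{i=1}^P λ_i(1 − λ_i/(κ + λ_i)). Then Re(κ̃) ≥ κ. -/
/-!
Taking real parts in the equation for `κ̃` and using `Re (1 / w) ≤ 1 / Re w` termwise gives
`f (Re κ̃) ≤ Re κ̃` for the real fixed-point map `f`. Since `f 0 = λ > 0`, the intermediate value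
theorem yields a fixed point of `f` in `(0, Re κ̃]`, which by uniqueness is `κ`.
-/

open Complex Set

noncomputable def fixedPointMap {P : ℕ} (N : ℕ) (lam : Fin P → ℝ) (l x : ℝ) : ℝ :=
  l + (1 / (N : ℝ)) * ∑ i, lam i * (1 - lam i / (x + lam i))

theorem Complex.inv_re_le_inv_re {w : ℂ} (hw : 0 < w.re) : w⁻¹.re ≤ w.re⁻¹ :=
  calc w⁻¹.re = w.re / normSq w := inv_re w
    _ ≤ w.re / (w.re * w.re) := by gcongr; exact re_sq_le_normSq w
    _ = w.re⁻¹ := by field_simp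

theorem mul_one_sub_div_add_le_re {t : ℝ} (ht : 0 ≤ t) {z : ℂ} (hz : 0 < z.re) :
    t * (1 - t / (z.re + t)) ≤ ((t : ℂ) * (1 - t / (z + t))).re := by
  have hre : (z + t).re = z.re + t := by simp
  have hinv := inv_re_le_inv_re (w := z + t) (by rw [hre]; positivity)
  rw [hre] at hinv
  rw [re_ofReal_mul, sub_re, one_re, div_eq_mul_inv (t : ℂ), re_ofReal_mul, div_eq_mul_inv t]
  gcongr

theorem fixedPointMap_zero {P N : ℕ} {lam : Fin P → ℝ} (hlam : ∀ i, 0 ≤ lam i) (l : ℝ) :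
    fixedPointMap N lam l 0 = l := by
  have hterm (i : Fin P) : lam i * (1 - lam i / lam i) = 0 := by
    rcases (hlam i).eq_or_lt with h | h
    · simp [← h]
    · rw [div_self h.ne', sub_self, mul_zero]
  simp [fixedPointMap, hterm]

theorem continuousOn_fixedPointMap {P N : ℕ} {lam : Fin P → ℝ} (hlam : ∀ i, 0 ≤ lam i) (l : ℝ) :
    ContinuousOn (fixedPointMap N lam l) (Ici 0) := by
  refine continuousOn_const.add (continuousOn_const.mul (continuousOn_finsetSum _ fun i _ => ?_))
  rcases (hlam i).eq_or_lt with h | h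
  · simpa [← h] using continuousOn_const
  · refine continuousOn_const.mul (continuousOn_const.sub (continuousOn_const.div
      (continuousOn_id.add continuousOn_const) fun x hx => ?_))
    have : (0 : ℝ) ≤ x := hx
    positivity

theorem fixedPointMap_re_le {P N : ℕ} {lam : Fin P → ℝ} (hlam : ∀ i, 0 ≤ lam i) {l η : ℝ}
    {z : ℂ} (hz : 0 < z.re)
    (hzeq : z = (l : ℂ) - I * (η : ℂ) +
      (1 / (N : ℂ)) * ∑ i, (lam i : ℂ) * (1 - (lam i : ℂ) / (z + (lam i : ℂ)))) :
    fixedPointMap N lam l z.re ≤ z.re :=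
  calc fixedPointMap N lam l z.re
      ≤ l + (1 / (N : ℝ)) * ∑ i, ((lam i : ℂ) * (1 - (lam i : ℂ) / (z + (lam i : ℂ)))).re := by
        unfold fixedPointMap
        gcongr with i
        exact mul_one_sub_div_add_le_re (hlam i) hz
    _ = z.re := by
        conv_rhs => rw [hzeq]
        rw [show (1 / (N : ℂ)) = ((1 / (N : ℝ) : ℝ) : ℂ) by push_cast; rfl]
        simp [re_sum]

theorem exists_mem_Ioc_apply_eq_self {f : ℝ → ℝ} {a : ℝ} (ha : 0 ≤ a)
    (hf : ContinuousOn f (Icc 0 a)) (hf0 : 0 < f 0) (hfa : f a ≤ a) :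
    ∃ c ∈ Ioc 0 a, f c = c := by
  obtain ⟨c, ⟨hc0, hca⟩, hgc⟩ :=
    intermediate_value_Icc' ha (hf.sub continuousOn_id) ⟨sub_nonpos.2 hfa, by simpa using hf0.le⟩
  have hfc : f c = c := sub_eq_zero.1 hgc
  refine ⟨c, ⟨hc0.lt_of_ne ?_, hca⟩, hfc⟩
  rintro rfl
  exact hf0.ne' hfc

theorem stmt_3_general (P N : ℕ) (lam : Fin P → ℝ) (hlam : ∀ i, 0 ≤ lam i)
    (l η : ℝ) (hl : 0 < l)
    (κ : ℝ)
    (hκuniq : ∀ κ' : ℝ, 0 < κ' →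
      κ' = l + (1 / (N : ℝ)) * ∑ i, lam i * (1 - lam i / (κ' + lam i)) → κ' = κ)
    (kt : ℂ) (hre : 0 < kt.re)
    (hkt : kt = (l : ℂ) - Complex.I * (η : ℂ) +
      (1 / (N : ℂ)) * ∑ i, (lam i : ℂ) * (1 - (lam i : ℂ) / (kt + (lam i : ℂ)))) :
    κ ≤ kt.re := by
  obtain ⟨c, ⟨hc0, hca⟩, hfc⟩ := exists_mem_Ioc_apply_eq_self hre.le
    ((continuousOn_fixedPointMap hlam l).mono Icc_subset_Ici_self)
    (by rwa [fixedPointMap_zero hlam]) (fixedPointMap_re_le hlam hre hkt)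
  rw [← hκuniq c hc0 hfc.symm]
  exact hca

/-- The real part of the complex effective regularization at λ − iη dominates
the real effective regularization at λ. -/
theorem stmt_3 (P N : ℕ) (hN : 0 < N) (lam : Fin P → ℝ) (hlam : ∀ i, 0 ≤ lam i)
    (l η : ℝ) (hl : 0 < l) (hη : 0 < η)
    (κ : ℝ) (hκ : 0 < κ)
    (hκeq : κ = l + (1 / (N : ℝ)) * ∑ i, lam i * (1 - lam i / (κ + lam i)))
    (hκuniq : ∀ κ' : ℝ, 0 < κ' →
      κ' = l + (1 / (N : ℝ)) * ∑ i, lam i * (1 - lam i / (κ' + lam i)) → κ' = κ)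
    (kt : ℂ) (hre : 0 < kt.re)
    (hkt : kt = (l : ℂ) - Complex.I * (η : ℂ) +
      (1 / (N : ℂ)) * ∑ i, (lam i : ℂ) * (1 - (lam i : ℂ) / (kt + (lam i : ℂ)))) :
    κ ≤ kt.re :=
  stmt_3_general P N lam hlam l η hl κ hκuniq kt hre hkt
end

section
/- Let Q = A + iB ∈ ℂ^{P×P} with A real symmetric positive definite and B real symmetric. Then ‖Q^{-1}‖_op ≤ ‖A^{-1}‖_op = 1/λ_min(A). -/
/-!
Since `B` is symmetric, `⟪x, B x⟫` is real, so `Re ⟪x, Q x⟫ = ⟪x, A x⟫ ≥ λ_min(A) ‖x‖²`.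
By Cauchy–Schwarz this coercivity gives `‖Q x‖ ≥ λ_min(A) ‖x‖`, i.e. `‖Q⁻¹‖ ≤ 1 / λ_min(A)`.
The same argument applied to `A` bounds `‖A⁻¹‖` by `1 / λ_min(A)`, and an eigenvector of `A`
for `λ_min(A)` shows that this bound is attained.
-/

open Matrix RCLike
open scoped InnerProductSpace ComplexOrder MatrixOrder

theorem ContinuousLinearMap.mul_norm_le_norm_apply_of_le_re_inner {𝕜 E : Type*} [RCLike 𝕜]
    [NormedAddCommGroup E] [InnerProductSpace 𝕜 E] {T : E →L[𝕜] E} {c : ℝ}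
    (h : ∀ x, c * ‖x‖ ^ 2 ≤ re ⟪x, T x⟫_𝕜) (x : E) : c * ‖x‖ ≤ ‖T x‖ := by
  rcases eq_or_ne x 0 with rfl | hx
  · simp
  refine le_of_mul_le_mul_right ?_ (norm_pos_iff.mpr hx)
  calc c * ‖x‖ * ‖x‖ = c * ‖x‖ ^ 2 := by ring
    _ ≤ ‖⟪x, T x⟫_𝕜‖ := (h x).trans (re_le_norm _)
    _ ≤ ‖T x‖ * ‖x‖ := (norm_inner_le_norm _ _).trans_eq (mul_comm _ _)

namespace Matrix

variable {n 𝕜 : Type*} [Fintype n] [RCLike 𝕜]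

theorem PosSemidef.map_ofReal {A : Matrix n n ℝ} (hA : A.PosSemidef) :
    (A.map ((↑) : ℝ → 𝕜)).PosSemidef := by
  obtain ⟨m, v, rfl⟩ := posSemidef_iff_eq_sum_vecMulVec.mp hA
  refine posSemidef_iff_eq_sum_vecMulVec.mpr ⟨m, fun k ↦ (↑) ∘ v k, ?_⟩
  ext i j
  simp [Matrix.sum_apply, vecMulVec_apply]

variable [DecidableEq n]

theorem algebraMap_le_map_ofReal {A : Matrix n n ℝ} {c : ℝ} (h : algebraMap ℝ _ c ≤ A) :
    algebraMap ℝ (Matrix n n 𝕜) c ≤ A.map (↑) := by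
  rw [le_iff]
  convert (le_iff.mp h).map_ofReal (𝕜 := 𝕜) using 1
  rw [Matrix.map_sub, map_algebraMap] <;> simp

theorem IsHermitian.algebraMap_iInf_eigenvalues_le {A : Matrix n n 𝕜} (hA : A.IsHermitian) :
    algebraMap ℝ (Matrix n n 𝕜) (⨅ i, hA.eigenvalues i) ≤ A := by
  rw [algebraMap_le_iff_le_spectrum hA.isSelfAdjoint, hA.spectrum_real_eq_range_eigenvalues]
  rintro _ ⟨i, rfl⟩
  exact ciInf_le (Set.finite_range _).bddBelow i

theorem PosDef.iInf_eigenvalues_pos [Nonempty n] {A : Matrix n n 𝕜} (hA : A.PosDef) :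
    0 < ⨅ i, hA.1.eigenvalues i := by
  obtain ⟨i, hi⟩ := exists_eq_ciInf_of_finite (f := hA.1.eigenvalues)
  exact hi ▸ hA.eigenvalues_pos i

theorem inner_toEuclideanCLM_self (M : Matrix n n 𝕜) (x : EuclideanSpace 𝕜 n) :
    ⟪x, toEuclideanCLM (𝕜 := 𝕜) M x⟫_𝕜 = star x.ofLp ⬝ᵥ M *ᵥ x.ofLp := by
  rw [EuclideanSpace.inner_eq_star_dotProduct, dotProduct_comm, ofLp_toEuclideanCLM]

theorem mul_norm_sq_le_re_inner_toEuclideanCLM {M : Matrix n n 𝕜} {c : ℝ}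
    (h : algebraMap ℝ (Matrix n n 𝕜) c ≤ M) (x : EuclideanSpace 𝕜 n) :
    c * ‖x‖ ^ 2 ≤ re ⟪x, toEuclideanCLM (𝕜 := 𝕜) M x⟫_𝕜 := by
  have hpsd := (le_iff.mp h).re_dotProduct_nonneg x.ofLp
  have hx : ‖x‖ ^ 2 = re (star x.ofLp ⬝ᵥ x.ofLp) := by
    rw [← inner_self_eq_norm_sq (𝕜 := 𝕜), EuclideanSpace.inner_eq_star_dotProduct,
      dotProduct_comm]
  rw [sub_mulVec, dotProduct_sub, map_sub, Algebra.algebraMap_eq_smul_one, smul_mulVec,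
    one_mulVec, dotProduct_smul, RCLike.smul_re] at hpsd
  rw [inner_toEuclideanCLM_self, hx]
  linarith

theorem re_inner_toEuclideanCLM_add_I_smul (A : Matrix n n 𝕜) {B : Matrix n n 𝕜}
    (hB : B.IsHermitian) (x : EuclideanSpace 𝕜 n) :
    re ⟪x, toEuclideanCLM (𝕜 := 𝕜) (A + (I : 𝕜) • B) x⟫_𝕜 =
      re ⟪x, toEuclideanCLM (𝕜 := 𝕜) A x⟫_𝕜 := by
  rw [inner_toEuclideanCLM_self, inner_toEuclideanCLM_self, add_mulVec, smul_mulVec,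
    dotProduct_add, dotProduct_smul, map_add, smul_eq_mul, mul_re, I_re,
    hB.im_star_dotProduct_mulVec_self]
  ring

theorem norm_toEuclideanCLM_inv_le_of_le_re_inner {M : Matrix n n 𝕜} {c : ℝ} (hc : 0 < c)
    (h : ∀ x, c * ‖x‖ ^ 2 ≤ re ⟪x, toEuclideanCLM (𝕜 := 𝕜) M x⟫_𝕜) :
    ‖toEuclideanCLM (𝕜 := 𝕜) M⁻¹‖ ≤ c⁻¹ := by
  by_cases hM : IsUnit M.det
  · refine ContinuousLinearMap.opNorm_le_bound _ (inv_nonneg.2 hc.le) fun y ↦ ?_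
    have hy : toEuclideanCLM (𝕜 := 𝕜) M (toEuclideanCLM (𝕜 := 𝕜) M⁻¹ y) = y := by
      apply WithLp.ofLp_injective
      simp [mulVec_mulVec, mul_nonsing_inv _ hM]
    rw [inv_mul_eq_div, le_div_iff₀' hc]
    simpa only [hy] using ContinuousLinearMap.mul_norm_le_norm_apply_of_le_re_inner h
      (toEuclideanCLM (𝕜 := 𝕜) M⁻¹ y)
  -- a singular `M` has `M⁻¹ = 0` in Mathlib, so the bound is trivial
  · simp [nonsing_inv_apply_not_isUnit _ hM, hc.le]

theorem norm_toEuclideanCLM_add_I_smul_inv_le {A B : Matrix n n 𝕜} {c : ℝ} (hc : 0 < c)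
    (hA : algebraMap ℝ (Matrix n n 𝕜) c ≤ A) (hB : B.IsHermitian) :
    ‖toEuclideanCLM (𝕜 := 𝕜) (A + (I : 𝕜) • B)⁻¹‖ ≤ c⁻¹ :=
  norm_toEuclideanCLM_inv_le_of_le_re_inner hc fun x ↦
    (re_inner_toEuclideanCLM_add_I_smul A hB x).symm ▸
      mul_norm_sq_le_re_inner_toEuclideanCLM hA x

theorem PosDef.norm_toEuclideanCLM_inv [Nonempty n] {A : Matrix n n 𝕜} (hA : A.PosDef) :
    ‖toEuclideanCLM (𝕜 := 𝕜) A⁻¹‖ = (⨅ i, hA.1.eigenvalues i)⁻¹ := by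
  refine le_antisymm (norm_toEuclideanCLM_inv_le_of_le_re_inner hA.iInf_eigenvalues_pos
    (mul_norm_sq_le_re_inner_toEuclideanCLM hA.1.algebraMap_iInf_eigenvalues_le)) ?_
  obtain ⟨j, hj⟩ := exists_eq_ciInf_of_finite (f := hA.1.eigenvalues)
  set v := hA.1.eigenvectorBasis j
  have hv : toEuclideanCLM (𝕜 := 𝕜) A⁻¹ v = (hA.1.eigenvalues j)⁻¹ • v := by
    apply WithLp.ofLp_injective
    rw [ofLp_toEuclideanCLM, WithLp.ofLp_smul, eq_inv_smul_iff₀ (hA.eigenvalues_pos j).ne',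
      ← mulVec_smul, ← hA.1.mulVec_eigenvectorBasis, mulVec_mulVec,
      nonsing_inv_mul _ ((isUnit_iff_isUnit_det A).mp hA.isUnit), one_mulVec]
  have hle := (toEuclideanCLM (𝕜 := 𝕜) A⁻¹).le_opNorm v
  rw [hv, norm_smul, hA.1.eigenvectorBasis.orthonormal.1 j] at hle
  rw [← hj]
  simpa [abs_of_pos (hA.eigenvalues_pos j)] using hle

end Matrix

/-- Operator norm bound: ‖Q⁻¹‖_op ≤ ‖A⁻¹‖_op = 1/λ_min(A) for Q = A + iB with A
real symmetric positive definite and B real symmetric. -/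
theorem stmt_8 (P : ℕ) (hP : 0 < P) (A B : Matrix (Fin P) (Fin P) ℝ)
    (hA : A.PosDef) (hB : B.IsSymm) :
    letI Q : Matrix (Fin P) (Fin P) ℂ :=
      A.map Complex.ofReal + Complex.I • B.map Complex.ofReal
    ‖Matrix.toEuclideanCLM (𝕜 := ℂ) Q⁻¹‖ ≤ ‖Matrix.toEuclideanCLM (𝕜 := ℝ) A⁻¹‖ ∧
      ‖Matrix.toEuclideanCLM (𝕜 := ℝ) A⁻¹‖ = (⨅ i, hA.1.eigenvalues i)⁻¹ := by
  have : Nonempty (Fin P) := Fin.pos_iff_nonempty.mp hP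
  have hBc : (B.map Complex.ofReal).IsHermitian :=
    (isHermitian_iff_isSymm.mpr hB).map _ fun _ ↦ (Complex.conj_ofReal _).symm
  refine ⟨hA.norm_toEuclideanCLM_inv ▸ ?_, hA.norm_toEuclideanCLM_inv⟩
  exact norm_toEuclideanCLM_add_I_smul_inv_le hA.iInf_eigenvalues_pos
    (algebraMap_le_map_ofReal hA.1.algebraMap_iInf_eigenvalues_le) hBc
end

section
/- Suppose m̃(t) > 0 satisfies 1 = λ m̃ + (1/N) ∑_{i=1}^P (1 − (1 + tλ_i)/(1 + tλ_i + m̃λ_i)) in a neighborhood of t = 0, where λ > 0 and λ_i ≥ 0. Let κ = 1/m̃(0), so that κ satisfies 1 = λ/κ + (1/N)∑ λ_i/(κ + λ_i), and let ∂κ/∂λ = (1 − (1/N)∑_{i=1}^P λ_i²/(κ+λ_i)²)^{-1}. Then the derivative of m̃ at t = 0 equals ∂κ/∂λ − 1. -/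
/-!
The fixed-point relation holds identically near `t = 0`, so its `t`-derivative vanishes there.
With `κ = 1 / m̃(0)`, `A = (1/N) ∑ λᵢ / (κ + λᵢ)²` and `B = (1/N) ∑ λᵢ² / (κ + λᵢ)²`, this derivative
reads `λ m̃' + κ² A m̃' - κ B = 0`, while splitting `λᵢ / (κ + λᵢ)` in the equation for `κ` gives
`1 - B = λ / κ + κ A > 0`. Together, `m̃' (1 - B) = B`, i.e. `m̃' = (1 - B)⁻¹ - 1`.
-/

open Finset

theorem hasDerivAt_one_sub_div_tilted {m : ℝ → ℝ} {m' κ : ℝ} (a : ℝ) (hm : HasDerivAt m m' 0)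
    (hm0 : m 0 = κ⁻¹) (hκ : κ ≠ 0) (hκa : κ + a ≠ 0) :
    HasDerivAt (fun t => 1 - (1 + t * a) / (1 + t * a + m t * a))
      (κ ^ 2 * m' * (a / (κ + a) ^ 2) - κ * (a ^ 2 / (κ + a) ^ 2)) 0 := by
  have hnum : HasDerivAt (fun t : ℝ => 1 + t * a) a 0 := by
    simpa using ((hasDerivAt_id (0 : ℝ)).mul_const a).const_add 1
  have hden : 1 + 0 * a + m 0 * a ≠ 0 := by
    rw [hm0, zero_mul, add_zero, ← div_eq_inv_mul, one_add_div hκ]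
    exact div_ne_zero hκa hκ
  refine ((hnum.div (hnum.add (hm.mul_const a)) hden).const_sub 1).congr_deriv ?_
  have hκ' : 1 + κ⁻¹ * a = (κ + a) / κ := by field_simp
  simp only [Pi.add_apply, hm0, zero_mul, add_zero, hκ']
  field_simp
  ring

theorem hasDerivAt_tilted_fixedPointMap {ι : Type*} (s : Finset ι) (a : ι → ℝ) (l c : ℝ)
    {m : ℝ → ℝ} {m' κ : ℝ} (hm : HasDerivAt m m' 0) (hm0 : m 0 = κ⁻¹) (hκ : κ ≠ 0)
    (hκa : ∀ i ∈ s, κ + a i ≠ 0) :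
    HasDerivAt (fun t => l * m t + c * ∑ i ∈ s, (1 - (1 + t * a i) / (1 + t * a i + m t * a i)))
      (l * m' + κ ^ 2 * m' * (c * ∑ i ∈ s, a i / (κ + a i) ^ 2)
        - κ * (c * ∑ i ∈ s, a i ^ 2 / (κ + a i) ^ 2)) 0 := by
  have hsum := HasDerivAt.fun_sum fun i hi =>
    hasDerivAt_one_sub_div_tilted (a i) hm hm0 hκ (hκa i hi)
  refine ((hm.const_mul l).add (hsum.const_mul c)).congr_deriv ?_
  rw [sum_sub_distrib, ← mul_sum, ← mul_sum]
  ring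

theorem mul_sum_div_add_eq {ι : Type*} (s : Finset ι) (a : ι → ℝ) (c κ : ℝ)
    (hκa : ∀ i ∈ s, κ + a i ≠ 0) :
    c * ∑ i ∈ s, a i / (κ + a i)
      = κ * (c * ∑ i ∈ s, a i / (κ + a i) ^ 2) + c * ∑ i ∈ s, a i ^ 2 / (κ + a i) ^ 2 := by
  have hterm : ∀ i ∈ s, a i / (κ + a i) = κ * (a i / (κ + a i) ^ 2) + a i ^ 2 / (κ + a i) ^ 2 := by
    intro i hi
    field_simp [hκa i hi]
  rw [sum_congr rfl hterm, sum_add_distrib, ← mul_sum]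
  ring

theorem eq_inv_one_sub_sub_one {l κ A B m' : ℝ} (hl : 0 < l) (hκ : 0 < κ) (hA : 0 ≤ A)
    (hfix : 1 = l / κ + κ * A + B) (hder : l * m' + κ ^ 2 * m' * A - κ * B = 0) :
    m' = (1 - B)⁻¹ - 1 := by
  have hB : 1 - B = l / κ + κ * A := by linarith
  have hpos : 0 < 1 - B := by rw [hB]; positivity
  have hm' : m' * (1 - B) = B := by
    rw [hB]
    field_simp
    linear_combination hder
  field_simp
  linarith

theorem stmt_14_general (P N : ℕ) (lam : Fin P → ℝ) (hlam : ∀ i, 0 ≤ lam i)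
    (l : ℝ) (hl : 0 < l) (mt : ℝ → ℝ) (ε : ℝ) (hε : 0 < ε)
    (hpos : ∀ t : ℝ, |t| < ε → 0 < mt t)
    (heq : ∀ t : ℝ, |t| < ε → 1 = l * mt t + (1 / (N : ℝ)) *
      ∑ i, (1 - (1 + t * lam i) / (1 + t * lam i + mt t * lam i)))
    (hκ : (1 : ℝ) = l / (mt 0)⁻¹ + (1 / (N : ℝ)) * ∑ i, lam i / ((mt 0)⁻¹ + lam i))
    (m' : ℝ) (hder : HasDerivAt mt m' 0) :
    m' = (1 - (1 / (N : ℝ)) * ∑ i, (lam i) ^ 2 / ((mt 0)⁻¹ + lam i) ^ 2)⁻¹ - 1 := by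
  set κ := (mt 0)⁻¹
  have hκpos : 0 < κ := inv_pos.2 (hpos 0 (by simpa using hε))
  have hκa : ∀ i ∈ univ, κ + lam i ≠ 0 := fun i _ => (add_pos_of_pos_of_nonneg hκpos (hlam i)).ne'
  have hconst : HasDerivAt (fun t => l * mt t + (1 / (N : ℝ)) *
      ∑ i, (1 - (1 + t * lam i) / (1 + t * lam i + mt t * lam i))) 0 0 := by
    refine (hasDerivAt_const (0 : ℝ) (1 : ℝ)).congr_of_eventuallyEq ?_
    filter_upwards [Metric.ball_mem_nhds (0 : ℝ) hε] with t ht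
    exact (heq t (by simpa [Real.dist_eq] using ht)).symm
  have hA : 0 ≤ (1 / (N : ℝ)) * ∑ i, lam i / (κ + lam i) ^ 2 :=
    mul_nonneg (by positivity) (sum_nonneg fun i _ => div_nonneg (hlam i) (sq_nonneg _))
  rw [mul_sum_div_add_eq univ lam _ κ hκa, ← add_assoc] at hκ
  exact eq_inv_one_sub_sub_one hl hκpos hA hκ
    ((hasDerivAt_tilted_fixedPointMap univ lam l _ hder (inv_inv _).symm hκpos.ne' hκa).unique hconst)

/-- Lemma "mtilde": the derivative at t = 0 of the reciprocal effective
regularization m̃(t) of the tilted covariance equals ∂κ/∂λ − 1, where κ = 1/m̃(0). -/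
theorem stmt_14 (P N : ℕ) (hN : 0 < N) (lam : Fin P → ℝ) (hlam : ∀ i, 0 ≤ lam i)
    (l : ℝ) (hl : 0 < l) (mt : ℝ → ℝ) (ε : ℝ) (hε : 0 < ε)
    (hpos : ∀ t : ℝ, |t| < ε → 0 < mt t)
    (heq : ∀ t : ℝ, |t| < ε → 1 = l * mt t + (1 / (N : ℝ)) *
      ∑ i, (1 - (1 + t * lam i) / (1 + t * lam i + mt t * lam i)))
    (hκ : (1 : ℝ) = l / (mt 0)⁻¹ + (1 / (N : ℝ)) * ∑ i, lam i / ((mt 0)⁻¹ + lam i))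
    (m' : ℝ) (hder : HasDerivAt mt m' 0) :
    m' = (1 - (1 / (N : ℝ)) * ∑ i, (lam i) ^ 2 / ((mt 0)⁻¹ + lam i) ^ 2)⁻¹ - 1 :=
  stmt_14_general P N lam hlam l hl mt ε hε hpos heq hκ m' hder
end

section
/- Suppose the eigenvalues satisfy c₁ i^{-1-γ} ≤ λ_i ≤ c₂ i^{-1-γ} for constants 0 < c₁ ≤ c₂ and γ > 0, with P ≥ C·N for a sufficiently large constant C, and let κ = κ(0,N) > 0 solve N = ∑_{i=1}^P λ_i/(κ + λ_i). Then there exist constants depending only on c₁, c₂, γ such that κ ≍ N^{-1-γ}, i.e. c'₁ N^{-1-γ} ≤ κ ≤ c'₂ N^{-1-γ}. -/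
open Finset Real

/-!
If `κ < λ_k` then `λ_k / (κ + λ_k) > 1/2`; were `κ` below `c₁ (2N)^{-1-γ}`, this would hold for
the first `2N` indices and push the sum above `N`. Conversely, split the sum at `m = ⌊N/2⌋`: the
first `m` terms are at most `1`, and the others at most `λ_k / κ`, whose sum is controlled by
`∫_m^∞ x^{-1-γ} dx = m^{-γ}/γ`. Hence `N/2 ≤ c₂ (1 + 1/γ) (N/2)^{-γ} / κ`.
-/

/-- The ridgeless effective regularization `κ(0, N)` is the solution `κ` of `effDim lam P κ = N`. -/
noncomputable def effDim (lam : ℕ → ℝ) (P : ℕ) (κ : ℝ) : ℝ :=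
  ∑ k ∈ range P, lam k / (κ + lam k)

theorem sum_Ico_add_one_rpow_neg_le_of_pos {γ : ℝ} (hγ : 0 < γ) {a : ℕ} (ha : 0 < a) (b : ℕ) :
    ∑ k ∈ Ico a b, ((k : ℝ) + 1) ^ (-(1 + γ)) ≤ (a : ℝ) ^ (-γ) / γ := by
  have ha' : (0 : ℝ) < a := by exact_mod_cast ha
  have hanti : AntitoneOn (fun x : ℝ => x ^ (-(1 + γ))) (Set.Ici (a : ℝ)) :=
    fun x hx y _ hxy => rpow_le_rpow_of_nonpos (ha'.trans_le hx) hxy (by linarith)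
  have h := (hanti.mono Set.Icc_subset_Ici_self).sum_Ico_le_integral (b := b)
    (integrableOn_Ioi_rpow_of_lt (by linarith) ha')
    (fun t ht => rpow_nonneg (ha'.le.trans (le_of_lt ht)) _)
  rw [integral_Ioi_rpow_of_lt (by linarith) ha'] at h
  convert h using 1
  · push_cast; rfl
  · rw [show -(1 + γ) + 1 = -γ by ring]; field_simp

theorem sum_Ico_add_one_rpow_neg_le {γ : ℝ} (hγ : 0 < γ) (a b : ℕ) :
    ∑ k ∈ Ico a b, ((k : ℝ) + 1) ^ (-(1 + γ)) ≤ (1 + 1 / γ) * ((a : ℝ) + 1) ^ (-γ) := by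
  rcases lt_or_ge a b with hab | hba
  · rw [sum_eq_sum_Ico_succ_bot hab, add_mul, one_mul, one_div_mul_eq_div]
    have hhead : ((a : ℝ) + 1) ^ (-(1 + γ)) ≤ ((a : ℝ) + 1) ^ (-γ) :=
      rpow_le_rpow_of_exponent_le (by linarith [(Nat.cast_nonneg a : (0 : ℝ) ≤ a)])
        (by linarith)
    have htail := sum_Ico_add_one_rpow_neg_le_of_pos hγ a.succ_pos b
    push_cast at htail
    exact add_le_add hhead htail
  · rw [Ico_eq_empty_of_le hba, sum_empty]
    positivity

theorem half_lt_effDim {lam : ℕ → ℝ} {κ : ℝ} {n P : ℕ} (hκ : 0 < κ) (hn : 0 < n)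
    (hnP : n ≤ P) (hlam : ∀ k < P, 0 ≤ lam k) (hbig : ∀ k < n, κ < lam k) :
    (n : ℝ) / 2 < effDim lam P κ := by
  have hhalf : ∀ k ∈ range n, 1 / 2 < lam k / (κ + lam k) := fun k hk => by
    have hk := hbig k (mem_range.mp hk)
    rw [lt_div_iff₀ (by linarith)]
    linarith
  calc (n : ℝ) / 2 = ∑ _k ∈ range n, (1 / 2 : ℝ) := by
        rw [sum_const, card_range, nsmul_eq_mul]; ring
    _ < ∑ k ∈ range n, lam k / (κ + lam k) :=
        sum_lt_sum_of_nonempty (nonempty_range_iff.mpr hn.ne') hhalf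
    _ ≤ effDim lam P κ :=
        sum_le_sum_of_subset_of_nonneg (range_subset_range.mpr hnP) fun k hk _ =>
          have := hlam k (mem_range.mp hk)
          div_nonneg this (by linarith)

theorem effDim_le {lam : ℕ → ℝ} {κ c γ : ℝ} {P : ℕ} (hκ : 0 < κ) (hγ : 0 < γ) (hc : 0 ≤ c)
    (hlam : ∀ k < P, 0 ≤ lam k ∧ lam k ≤ c * ((k : ℝ) + 1) ^ (-(1 + γ))) {m : ℕ}
    (hmP : m ≤ P) :
    effDim lam P κ ≤ m + c / κ * ((1 + 1 / γ) * ((m : ℝ) + 1) ^ (-γ)) := by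
  rw [effDim, ← sum_range_add_sum_Ico _ hmP]
  have hhead : ∑ k ∈ range m, lam k / (κ + lam k) ≤ m := by
    calc ∑ k ∈ range m, lam k / (κ + lam k) ≤ ∑ _k ∈ range m, (1 : ℝ) :=
          sum_le_sum fun k hk => by
            have := (hlam k ((mem_range.mp hk).trans_le hmP)).1
            exact div_le_one_of_le₀ (by linarith) (by linarith)
      _ = m := by simp
  have htail : ∑ k ∈ Ico m P, lam k / (κ + lam k) ≤
      c / κ * ((1 + 1 / γ) * ((m : ℝ) + 1) ^ (-γ)) := by
    calc ∑ k ∈ Ico m P, lam k / (κ + lam k)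
        ≤ ∑ k ∈ Ico m P, c / κ * ((k : ℝ) + 1) ^ (-(1 + γ)) :=
          sum_le_sum fun k hk => by
            obtain ⟨hnonneg, hle⟩ := hlam k (mem_Ico.mp hk).2
            calc lam k / (κ + lam k) ≤ lam k / κ :=
                  div_le_div_of_nonneg_left hnonneg hκ (by linarith)
              _ ≤ c * ((k : ℝ) + 1) ^ (-(1 + γ)) / κ := by gcongr
              _ = c / κ * ((k : ℝ) + 1) ^ (-(1 + γ)) := by ring
      _ = c / κ * ∑ k ∈ Ico m P, ((k : ℝ) + 1) ^ (-(1 + γ)) := by rw [mul_sum]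
      _ ≤ c / κ * ((1 + 1 / γ) * ((m : ℝ) + 1) ^ (-γ)) := by
          gcongr; exact sum_Ico_add_one_rpow_neg_le hγ m P
  exact add_le_add hhead htail

theorem mul_rpow_le_of_eq_effDim {lam : ℕ → ℝ} {κ γ c : ℝ} {N P : ℕ} (hκ : 0 < κ)
    (hγ : 0 ≤ γ) (hc : 0 ≤ c) (hN : 0 < N) (hNP : 2 * N ≤ P)
    (hlam : ∀ k < P, c * ((k : ℝ) + 1) ^ (-(1 + γ)) ≤ lam k) (hsum : (N : ℝ) = effDim lam P κ) :
    c * 2 ^ (-(1 + γ)) * (N : ℝ) ^ (-(1 + γ)) ≤ κ := by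
  by_contra! hsmall
  have hbig : ∀ k < 2 * N, κ < lam k := fun k hk => by
    have hk' : (k : ℝ) + 1 ≤ 2 * N := by exact_mod_cast hk
    calc κ < c * 2 ^ (-(1 + γ)) * (N : ℝ) ^ (-(1 + γ)) := hsmall
      _ = c * (2 * (N : ℝ)) ^ (-(1 + γ)) := by
          rw [mul_rpow (by norm_num) (by positivity), mul_assoc]
      _ ≤ c * ((k : ℝ) + 1) ^ (-(1 + γ)) := by
          gcongr c * ?_
          exact rpow_le_rpow_of_nonpos (by positivity) hk' (by linarith)
      _ ≤ lam k := hlam k (by omega)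
  have hnonneg : ∀ k < P, 0 ≤ lam k := fun k hk => le_trans (by positivity) (hlam k hk)
  have := half_lt_effDim hκ (by omega) hNP hnonneg hbig
  push_cast at this
  linarith

theorem le_mul_rpow_of_eq_effDim {lam : ℕ → ℝ} {κ γ c : ℝ} {N P : ℕ} (hκ : 0 < κ)
    (hγ : 0 < γ) (hc : 0 ≤ c) (hN : 0 < N) (hNP : N ≤ P)
    (hlam : ∀ k < P, 0 ≤ lam k ∧ lam k ≤ c * ((k : ℝ) + 1) ^ (-(1 + γ)))
    (hsum : (N : ℝ) = effDim lam P κ) :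
    κ ≤ 2 ^ (1 + γ) * c * (1 + 1 / γ) * (N : ℝ) ^ (-(1 + γ)) := by
  have hNpos : (0 : ℝ) < N := by exact_mod_cast hN
  have hsplit := effDim_le hκ hγ hc hlam (m := N / 2) (by omega)
  rw [← hsum] at hsplit
  have hhalf_le : (N : ℝ) / 2 ≤ ((N / 2 : ℕ) : ℝ) + 1 := by
    have : (N : ℝ) ≤ 2 * ((N / 2 : ℕ) : ℝ) + 1 := by exact_mod_cast (by omega : N ≤ 2 * (N / 2) + 1)
    linarith
  have hle_half : ((N / 2 : ℕ) : ℝ) ≤ (N : ℝ) / 2 := Nat.cast_div_le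
  have hpow : (((N / 2 : ℕ) : ℝ) + 1) ^ (-γ) ≤ 2 ^ γ * (N : ℝ) ^ (-γ) := by
    calc (((N / 2 : ℕ) : ℝ) + 1) ^ (-γ) ≤ ((N : ℝ) / 2) ^ (-γ) :=
          rpow_le_rpow_of_nonpos (by positivity) hhalf_le (by linarith)
      _ = 2 ^ γ * (N : ℝ) ^ (-γ) := by
          rw [div_rpow hNpos.le (by norm_num), rpow_neg (by norm_num : (0 : ℝ) ≤ 2),
            div_inv_eq_mul, mul_comm]
  have hkey : (N : ℝ) / 2 ≤ c / κ * ((1 + 1 / γ) * (2 ^ γ * (N : ℝ) ^ (-γ))) := by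
    calc (N : ℝ) / 2 ≤ c / κ * ((1 + 1 / γ) * (((N / 2 : ℕ) : ℝ) + 1) ^ (-γ)) := by linarith
      _ ≤ _ := by gcongr
  rw [div_mul_eq_mul_div, le_div_iff₀ hκ] at hkey
  have hexp : (N : ℝ) ^ (-(1 + γ)) = (N : ℝ) ^ (-γ) / N := by
    rw [show -(1 + γ) = -γ + -1 by ring, rpow_add hNpos, rpow_neg_one, div_eq_mul_inv]
  rw [hexp, rpow_add (by norm_num), rpow_one, mul_div_assoc', le_div_iff₀ hNpos]
  linarith

/-- If λᵢ ≍ i^{-1-γ} and P ≥ CN for a large constant C, then the ridgeless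
effective regularization κ = κ(0,N), solving N = ∑ λᵢ/(κ + λᵢ), satisfies
κ ≍ N^{-1-γ}, with constants depending only on c₁, c₂, γ. -/
theorem stmt_17 (γ c₁ c₂ : ℝ) (hγ : 0 < γ) (hc₁ : 0 < c₁) (hc : c₁ ≤ c₂) :
    ∃ C c₁' c₂' : ℝ, 0 < C ∧ 0 < c₁' ∧ 0 < c₂' ∧
      ∀ (N P : ℕ) (lam : Fin P → ℝ) (κ : ℝ),
        0 < N → C * (N : ℝ) ≤ (P : ℝ) →
        (∀ i : Fin P, c₁ * (((i : ℕ) + 1 : ℝ)) ^ (-(1 + γ)) ≤ lam i ∧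
          lam i ≤ c₂ * (((i : ℕ) + 1 : ℝ)) ^ (-(1 + γ))) →
        0 < κ → (N : ℝ) = ∑ i, lam i / (κ + lam i) →
        c₁' * (N : ℝ) ^ (-(1 + γ)) ≤ κ ∧ κ ≤ c₂' * (N : ℝ) ^ (-(1 + γ)) := by
  have hc₂ : 0 < c₂ := hc₁.trans_le hc
  refine ⟨2, c₁ * 2 ^ (-(1 + γ)), 2 ^ (1 + γ) * c₂ * (1 + 1 / γ), two_pos, by positivity,
    by positivity, fun N P lam κ hN hP hlam hκ hsum => ?_⟩
  have h2NP : 2 * N ≤ P := by exact_mod_cast hP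
  set μ : ℕ → ℝ := fun k => if h : k < P then lam ⟨k, h⟩ else 0
  have hμ : ∀ k (h : k < P), μ k = lam ⟨k, h⟩ := fun k h => dif_pos h
  have hμ_bounds : ∀ k (h : k < P), c₁ * ((k : ℝ) + 1) ^ (-(1 + γ)) ≤ μ k ∧
      μ k ≤ c₂ * ((k : ℝ) + 1) ^ (-(1 + γ)) := fun k h => hμ k h ▸ hlam ⟨k, h⟩
  have hsumμ : (N : ℝ) = effDim μ P κ := by
    rw [hsum, effDim, ← Fin.sum_univ_eq_sum_range (fun k => μ k / (κ + μ k))]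
    simp only [hμ _ (Fin.is_lt _), Fin.eta]
  refine ⟨mul_rpow_le_of_eq_effDim hκ hγ.le hc₁.le hN h2NP (fun k hk => (hμ_bounds k hk).1) hsumμ,
    le_mul_rpow_of_eq_effDim hκ hγ hc₂.le hN (by omega)
      (fun k hk => ⟨le_trans (by positivity) (hμ_bounds k hk).1, (hμ_bounds k hk).2⟩) hsumμ⟩
end
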